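/- Let E be a Dedekind orthocomplete GEA with an SK-congruence ∼. If e ∼ e ⊕ f ⊕ d, then e ∼ e ⊕ f. -/
import Mathlib


universe u

/-- A generalized effect algebra: partial operation encoded by a definedness
relation `perp` together with a total function `op` whose values are only
meaningful when `perp` holds. -/
class GEA (E : Type u) where
  zero : E
  perp : E → E → Prop
  op : E → E → E
  perp_comm : ∀ {e f : E}, perp e f → perp f e
  op_comm : ∀ {e f : E}, perp e f → op e f = op f e
  assoc_perp₁ : ∀ {d e f : E}, perp e f → perp d (op e f) → perp d e
  assoc_perp₂ : ∀ {d e f : E}, perp e f → perp d (op e f) → perp (op d e) f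
  assoc_eq : ∀ {d e f : E}, perp e f → perp d (op e f) →
    op d (op e f) = op (op d e) f
  perp_zero : ∀ e : E, perp e zero
  op_zero : ∀ e : E, op e zero = e
  cancel : ∀ {d e f : E}, perp d e → perp d f → op d e = op d f → e = f
  pos : ∀ {e f : E}, perp e f → op e f = zero → e = zero ∧ f = zero

namespace GEA

variable {E : Type u} [GEA E]

/-- `e ≤ f` iff `e ⊕ d = f` for some `d`. -/
def le (e f : E) : Prop := ∃ d : E, perp e d ∧ op e d = f

/-- `p` is sharp. -/
def Sharp (p : E) : Prop := ∀ d : E, le d p → perp d p → d = zero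

/-- `p` is principal. -/
def Principal (p : E) : Prop :=
  ∀ e f : E, le e p → le f p → perp e f → le (op e f) p

/-- An ideal of a GEA. -/
def Ideal (S : Set E) : Prop :=
  (∀ s t : E, s ∈ S → le t s → t ∈ S) ∧
  (∀ s t : E, s ∈ S → t ∈ S → perp s t → op s t ∈ S)

/-- `E = H ⊕ K` : a direct sum decomposition into two subsets. -/
def DirectSum (H K : Set E) : Prop :=
  (∀ h k : E, h ∈ H → k ∈ K → perp h k) ∧
  (∀ e : E, ∃! p : E × E,
    p.1 ∈ H ∧ p.2 ∈ K ∧ perp p.1 p.2 ∧ op p.1 p.2 = e)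

/-- `FinSum e s x` : `x` is the (well-defined) orthosum of the finite
subfamily of `e` indexed by the finset `s`. -/
inductive FinSum {I : Type} (e : I → E) : Finset I → E → Prop
  | empty : FinSum e ∅ zero
  | cons {s : Finset I} {i : I} {x : E} (h : i ∉ s) :
      FinSum e s x → perp (e i) x → FinSum e (Finset.cons i s h) (op (e i) x)

/-- A family is orthogonal iff all its finite partial orthosums exist. -/
def OrthoFam {I : Type} (e : I → E) : Prop := ∀ s : Finset I, ∃ x : E, FinSum e s x

/-- `m` is the orthosum of the family `e` : the family is orthogonal and `m`
is the supremum of its finite partial orthosums. -/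
def IsOrthosum {I : Type} (e : I → E) (m : E) : Prop :=
  OrthoFam e ∧ (∀ (s : Finset I) (x : E), FinSum e s x → le x m) ∧
  ∀ b : E, (∀ (s : Finset I) (x : E), FinSum e s x → le x b) → le m b

/-- Dedekind orthocompleteness. -/
def DedekindOC (E : Type u) [GEA E] : Prop :=
  ∀ (I : Type) (e : I → E), OrthoFam e →
    (∃ b : E, ∀ (s : Finset I) (x : E), FinSum e s x → le x b) →
    ∃ m : E, IsOrthosum e m

/-- A Sherstnev–Kalinin congruence on a GEA. -/
structure SKCong (E : Type u) [GEA E] (sim : E → E → Prop) : Prop where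
  refl : ∀ e : E, sim e e
  symm : ∀ {e f : E}, sim e f → sim f e
  trans : ∀ {d e f : E}, sim d e → sim e f → sim d f
  sk1 : ∀ {e : E}, sim e zero → e = zero
  sk2 : ∀ {I : Type} (e f : I → E) (se sf : E), IsOrthosum e se →
    IsOrthosum f sf → (∀ i : I, sim (e i) (f i)) → sim se sf
  sk3d : ∀ {p s t : E}, perp s t → sim p (op s t) →
    ∃ e f : E, perp e f ∧ op e f = p ∧ sim e s ∧ sim f t
  sk3e : ∀ {e f s t : E}, perp e f → perp s t → op e f = op s t →
    ∃ e₁ e₂ f₁ f₂ : E, perp e₁ e₂ ∧ op e₁ e₂ = e ∧ perp f₁ f₂ ∧ op f₁ f₂ = f ∧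
      perp e₁ f₁ ∧ sim s (op e₁ f₁) ∧ perp e₂ f₂ ∧ sim t (op e₂ f₂)
  sk4a : ∀ {e f : E}, ¬ perp e f →
    ∃ e₁ f₁ : E, e₁ ≠ zero ∧ f₁ ≠ zero ∧ le e₁ e ∧ le f₁ f ∧ sim e₁ f₁
  sk4b : ∀ {e f : E}, ¬ le e f →
    ∃ e₁ d₁ : E, e₁ ≠ zero ∧ d₁ ≠ zero ∧ le e₁ e ∧ perp d₁ f ∧ sim e₁ d₁

/-- Subequivalence: `f ≲ e`. -/
def Subeq (sim : E → E → Prop) (f e : E) : Prop :=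
  ∃ e₁ : E, le e₁ e ∧ sim f e₁

/-- `e` and `f` are related. -/
def Related (sim : E → E → Prop) (e f : E) : Prop :=
  ∃ e₁ f₁ : E, e₁ ≠ zero ∧ f₁ ≠ zero ∧ le e₁ e ∧ le f₁ f ∧ sim e₁ f₁

/-- A hereditary subset. -/
def Hereditary (sim : E → E → Prop) (H : Set E) : Prop :=
  ∀ h e : E, h ∈ H → Subeq sim e h → e ∈ H

/-- An exocentral mapping on a GEA. -/
structure Exocentral (π : E → E) : Prop where
  perp_map : ∀ {e f : E}, perp e f → perp (π e) (π f)
  op_map : ∀ {e f : E}, perp e f → π (op e f) = op (π e) (π f)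
  idem : ∀ e : E, π (π e) = π e
  dec : ∀ e : E, le (π e) e
  orth : ∀ {e f : E}, π e = e → π f = zero → perp e f

/-- `π'` is the complementary mapping of `π` : `π'e = e ⊖ πe`. -/
def IsComplMap (π π' : E → E) : Prop :=
  ∀ e : E, perp (π e) (π' e) ∧ op (π e) (π' e) = e

/-- `π` (with complement `π'`) splits the equivalence relation `sim`. -/
def Splits (sim : E → E → Prop) (π π' : E → E) : Prop :=
  ∀ e f : E, e ∈ Set.range π → f ∈ Set.range π' → sim e f →
    e = zero ∧ f = zero

/-- A hull system `(η_e)_{e ∈ E}` on a GEA, where `η e : E → E` is the hull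
mapping indexed by `e`. -/
structure HullSystem (E : Type u) [GEA E] (η : E → E → E) : Prop where
  exo : ∀ e : E, Exocentral (η e)
  hs1 : ∀ x : E, η zero x = zero
  hs2 : ∀ e : E, η e e = e
  hs3 : ∀ e f x : E, η (η e f) x = η e (η f x)
  hs3' : ∀ e f x : E, η e (η f x) = η f (η e x)

/-- A GEX-orthogonal family. -/
def GEXOrtho {I : Type} (e : I → E) : Prop :=
  ∃ π : I → E → E, (∀ i : I, Exocentral (π i)) ∧
    (∀ i j : I, i ≠ j → ∀ x : E, π i (π j x) = zero) ∧
    ∀ i : I, π i (e i) = e i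

/-- Central orthocompleteness. -/
def CentrallyOC (E : Type u) [GEA E] : Prop :=
  ∀ (I : Type) (e : I → E), GEXOrtho e →
    (∃ m : E, IsOrthosum e m) ∧
    ∀ f : E, (∀ i : I, perp f (e i)) → ∀ m : E, IsOrthosum e m → perp f m

/-- A dimension equivalence relation: an SK-congruence satisfying SK4a′. -/
def IsDER (E : Type u) [GEA E] (sim : E → E → Prop) : Prop :=
  SKCong E sim ∧
  ∀ e f : E, ¬ Related sim e f →
    ∃ π π' : E → E, Exocentral π ∧ IsComplMap π π' ∧ Splits sim π π' ∧
      π e = e ∧ π' f = f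

/-- `η` is the hull system determined by the hull-determining set `Σ∼(E)` of
exocentral mappings splitting `sim` : each `η e` belongs to `Σ∼(E)` and is the
smallest member of `Σ∼(E)` fixing `e`. -/
def SigmaHull (sim : E → E → Prop) (η : E → E → E) : Prop :=
  (∀ e : E, ∃ π' : E → E, IsComplMap (η e) π' ∧ Splits sim (η e) π') ∧
  ∀ (e : E) (π π' : E → E), Exocentral π → IsComplMap π π' →
    Splits sim π π' → π e = e →
      (∀ x : E, η e (π x) = η e x) ∧ (∀ x : E, π (η e x) = η e x)

/-- A simple element. -/
def Simple (sim : E → E → Prop) (k : E) : Prop :=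
  ∀ e e' : E, perp e e' → op e e' = k → ¬ Related sim e e'

/-- A finite element. -/
def Finite' (sim : E → E → Prop) (f : E) : Prop :=
  ∀ e : E, le e f → sim e f → e = f

end GEA

namespace GEA

variable {E : Type u} [GEA E]

lemma perp_zero' (e : E) : perp (zero : E) e := perp_comm (perp_zero e)

lemma zero_op (e : E) : op (zero : E) e = e := by
  rw [op_comm (perp_zero' e), op_zero]

lemma le_refl' (e : E) : le e e := ⟨zero, perp_zero e, op_zero e⟩

/-- From `a ⊥ b` and `(a⊕b) ⊥ c`, right-associated data. -/
lemma assoc' {a b c : E} (hab : perp a b) (h : perp (op a b) c) :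
    perp b c ∧ perp a (op b c) ∧ op (op a b) c = op a (op b c) := by
  have hba : perp b a := perp_comm hab
  have h1 : perp c (op b a) := by rw [op_comm hba]; exact perp_comm h
  have hcb : perp c b := assoc_perp₁ hba h1
  have hbc : perp b c := perp_comm hcb
  have ha : perp a (op b c) := by
    have h2 := perp_comm (assoc_perp₂ hba h1)
    rwa [op_comm hcb] at h2
  exact ⟨hbc, ha, (assoc_eq hbc ha).symm⟩

/-- From `b ⊥ c` and `a ⊥ (b⊕c)`, swap data. -/
lemma swap' {a b c : E} (hbc : perp b c) (h : perp a (op b c)) :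
    perp a c ∧ perp b (op a c) ∧ op a (op b c) = op b (op a c) := by
  have hab : perp a b := assoc_perp₁ hbc h
  have h2 : perp (op a b) c := assoc_perp₂ hbc h
  have e1 : op a (op b c) = op (op a b) c := assoc_eq hbc h
  have h2' : perp (op b a) c := by rwa [op_comm hab] at h2
  obtain ⟨hac, hb, he⟩ := assoc' (perp_comm hab) h2'
  refine ⟨hac, hb, ?_⟩
  rw [e1, op_comm hab, he]

lemma perp_of_le {a b c : E} (h : le a b) (hbc : perp b c) : perp a c := by
  obtain ⟨t, hat, hab⟩ := h
  have : perp c (op a t) := by rw [hab]; exact perp_comm hbc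
  exact perp_comm (assoc_perp₁ hat this)

lemma le_trans' {a b c : E} (h : le a b) (h' : le b c) : le a c := by
  obtain ⟨s, has, hs⟩ := h
  obtain ⟨t, hbt, ht⟩ := h'
  have hbt' : perp (op a s) t := by rwa [hs]
  obtain ⟨hst, hast, he⟩ := assoc' has hbt'
  exact ⟨op s t, hast, by rw [← he, hs, ht]⟩

lemma op_le_op {a s m : E} (ham : perp a m) (h : le s m) :
    perp a s ∧ le (op a s) (op a m) := by
  obtain ⟨t, hst, hsm⟩ := h
  have ham' : perp a (op s t) := by rwa [hsm]
  exact ⟨assoc_perp₁ hst ham', t, assoc_perp₂ hst ham',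
    by rw [← assoc_eq hst ham', hsm]⟩

lemma le_op_self {a b : E} (h : perp a b) : le a (op a b) := ⟨b, h, rfl⟩

lemma le_op_self' {a b : E} (h : perp a b) : le b (op a b) :=
  ⟨a, perp_comm h, op_comm (perp_comm h)⟩

lemma cancel_le {a s m : E} (has : perp a s) (ham : perp a m)
    (h : le (op a s) (op a m)) : le s m := by
  obtain ⟨t, h2, he⟩ := h
  obtain ⟨hst, hast, heq⟩ := assoc' has h2
  exact ⟨t, hst, cancel hast ham (by rw [← heq, he])⟩

lemma finSum_empty {I : Type} {g : I → E} {s : Finset I} {x : E}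
    (h : FinSum g s x) (hs : s = ∅) : x = zero := by
  induction h with
  | empty => rfl
  | cons hj hx hperp ih => exact absurd hs (by simp)

lemma finSum_erase {I : Type} [DecidableEq I] {g : I → E} {s : Finset I} {x : E}
    (h : FinSum g s x) : ∀ i ∈ s, ∃ y, FinSum g (s.erase i) y ∧
      perp (g i) y ∧ op (g i) y = x := by
  induction h with
  | empty => intro i hi; simp at hi
  | @cons s j x hj hx hperp ih =>
    intro i hi
    rcases Finset.mem_cons.mp hi with rfl | his
    · exact ⟨x, by rw [Finset.erase_cons]; exact hx, hperp, rfl⟩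
    · obtain ⟨y, hy, hpy, hey⟩ := ih i his
      have hjx : perp (g j) (op (g i) y) := by rwa [hey]
      obtain ⟨hjy, hi', heq⟩ := swap' hpy hjx
      have hij : i ≠ j := by rintro rfl; exact hj his
      have hje : j ∉ s.erase i := fun hc => hj (Finset.mem_of_mem_erase hc)
      have hset : (Finset.cons j s hj).erase i = Finset.cons j (s.erase i) hje := by
        rw [Finset.cons_eq_insert, Finset.cons_eq_insert,
          Finset.erase_insert_of_ne (fun hc => hij hc.symm)]
      refine ⟨op (g j) y, ?_, hi', ?_⟩
      · rw [hset]; exact FinSum.cons hje hy hjy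
      · rw [← heq, hey]

lemma finSum_unique {I : Type} {g : I → E} {s : Finset I} {x y : E}
    (hx : FinSum g s x) (hy : FinSum g s y) : x = y := by
  classical
  induction hx generalizing y with
  | empty => exact (finSum_empty hy rfl).symm
  | @cons s i x hi hx hperp ih =>
    obtain ⟨y₀, hy₀, hpy, hey⟩ := finSum_erase hy i (Finset.mem_cons_self i s)
    rw [Finset.erase_cons] at hy₀
    rw [← hey, ih hy₀]

lemma finSum_subset {I : Type} [DecidableEq I] {g : I → E} {s : Finset I} {x : E}
    (h : FinSum g s x) : ∀ t ⊆ s, ∃ y, FinSum g t y ∧ le y x := by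
  induction h with
  | empty =>
    intro t ht
    rw [Finset.subset_empty.mp ht]
    exact ⟨zero, FinSum.empty, le_refl' _⟩
  | @cons s i x hi hx hperp ih =>
    intro t ht
    by_cases hit : i ∈ t
    · obtain ⟨y, hy, hle⟩ := ih (t.erase i) (fun a ha => by
        have h1 := ht (Finset.mem_of_mem_erase ha)
        exact (Finset.mem_cons.mp h1).resolve_left (Finset.ne_of_mem_erase ha))
      have hpy : perp (g i) y := perp_comm (perp_of_le hle (perp_comm hperp))
      refine ⟨op (g i) y, ?_, (op_le_op hperp hle).2⟩
      have hte : t = Finset.cons i (t.erase i) (Finset.notMem_erase i t) := by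
        rw [Finset.cons_eq_insert, Finset.insert_erase hit]
      rw [hte]; exact FinSum.cons _ hy hpy
    · obtain ⟨y, hy, hle⟩ := ih t (fun a ha =>
        (Finset.mem_cons.mp (ht ha)).resolve_left (by rintro rfl; exact hit ha))
      exact ⟨y, hy, le_trans' hle (le_op_self' hperp)⟩

lemma finSum_map {I J : Type} {σ : I ↪ J} {g : J → E} {s : Finset I} {x : E}
    (h : FinSum (fun i => g (σ i)) s x) : FinSum g (s.map σ) x := by
  induction h with
  | empty => rw [Finset.map_empty]; exact FinSum.empty
  | @cons s i x hi hx hperp ih =>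
    rw [Finset.map_cons]
    exact FinSum.cons _ ih hperp

lemma finSum_map_rev {I J : Type} [DecidableEq J] {σ : I ↪ J} {g : J → E}
    (s : Finset I) {x : E} (h : FinSum g (s.map σ) x) :
    FinSum (fun i => g (σ i)) s x := by
  induction s using Finset.cons_induction generalizing x with
  | empty =>
    rw [Finset.map_empty] at h
    rw [finSum_empty h rfl]; exact FinSum.empty
  | @cons i s hi ih =>
    rw [Finset.map_cons] at h
    obtain ⟨y, hy, hpy, hey⟩ := finSum_erase h (σ i) (Finset.mem_cons_self _ _)
    rw [Finset.erase_cons] at hy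
    rw [← hey]
    exact FinSum.cons hi (ih hy) hpy

lemma isOrthosum_cons {I : Type} {g : I → E} {m x : E}
    (hm : IsOrthosum g m) (hx : perp x m) :
    IsOrthosum (fun o : Option I => o.elim x g) (op x m) := by
  classical
  set g' : Option I → E := fun o => o.elim x g with hg'
  have key : ∀ s : Finset (Option I), ∃ z, FinSum g' s z ∧ le z (op x m) := by
    intro s
    obtain ⟨y, hy⟩ := hm.1 s.eraseNone
    have hym : le y m := hm.2.1 _ y hy
    have hxy : perp x y := perp_comm (perp_of_le hym (perp_comm hx))
    have hy' : FinSum g' (s.eraseNone.map Function.Embedding.some) y :=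
      finSum_map (σ := Function.Embedding.some) hy
    have hnone : none ∉ s.eraseNone.map Function.Embedding.some := by simp
    have hfull : FinSum g' (Finset.cons none _ hnone) (op x y) :=
      FinSum.cons hnone hy' hxy
    have hsub : s ⊆ Finset.cons none (s.eraseNone.map Function.Embedding.some) hnone := by
      intro o ho
      rcases o with _ | a
      · exact Finset.mem_cons_self _ _
      · refine Finset.mem_cons.mpr (Or.inr ?_)
        simp only [Finset.mem_map]
        exact ⟨a, Finset.mem_eraseNone.mpr ho, rfl⟩
    obtain ⟨z, hz, hle⟩ := finSum_subset hfull s hsub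
    exact ⟨z, hz, le_trans' hle (op_le_op hx hym).2⟩
  refine ⟨fun s => (key s).imp (fun z hz => hz.1), ?_, ?_⟩
  · intro s z hz
    obtain ⟨z', hz', hle⟩ := key s
    rwa [finSum_unique hz hz']
  · intro b hb
    have hxb : le x b := by
      have h0 : FinSum g' (Finset.cons none ∅ (by simp)) (op x zero) :=
        FinSum.cons _ FinSum.empty (perp_zero x)
      have := hb _ _ h0
      rwa [op_zero] at this
    obtain ⟨bx, hpbx, hbx⟩ := hxb
    have hbound : ∀ (s : Finset I) (y : E), FinSum g s y → le y bx := by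
      intro s y hy
      have hym := hm.2.1 s y hy
      have hxy : perp x y := perp_comm (perp_of_le hym (perp_comm hx))
      have hy' : FinSum g' (s.map Function.Embedding.some) y :=
        finSum_map (σ := Function.Embedding.some) hy
      have hnone : none ∉ s.map Function.Embedding.some := by simp
      have hle := hb _ _ (FinSum.cons hnone hy' hxy)
      rw [← hbx] at hle
      exact cancel_le hxy hpbx hle
    have hmbx : le m bx := hm.2.2 bx hbound
    have := (op_le_op hpbx hmbx).2
    rwa [hbx] at this

lemma isOrthosum_reindex {I J : Type} [DecidableEq J] {σ : I ≃ J} {g : J → E}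
    {m : E} (hm : IsOrthosum g m) : IsOrthosum (fun i => g (σ i)) m := by
  refine ⟨?_, ?_, ?_⟩
  · intro s
    obtain ⟨x, hx⟩ := hm.1 (s.map σ.toEmbedding)
    exact ⟨x, finSum_map_rev s hx⟩
  · intro s x hx
    exact hm.2.1 _ x (finSum_map (σ := σ.toEmbedding) hx)
  · intro b hb
    refine hm.2.2 b ?_
    intro t x hx
    have heq : (t.map σ.symm.toEmbedding).map σ.toEmbedding = t := by
      ext j; simp
    have h2 : FinSum g ((t.map σ.symm.toEmbedding).map σ.toEmbedding) x := by
      rwa [heq]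
    exact hb _ _ (finSum_map_rev _ h2)

lemma step_ex {sim : E → E → Prop} (hsim : SKCong E sim) {e f d : E}
    (h1 : perp e f) (h2 : perp (op e f) d) (h : sim e (op (op e f) d))
    {a : E} (ha : sim a e) :
    ∃ t : E × E × E, perp t.1 t.2.1 ∧ perp (op t.1 t.2.1) t.2.2 ∧
      op (op t.1 t.2.1) t.2.2 = a ∧ sim t.1 e ∧ sim t.2.1 f ∧ sim t.2.2 d := by
  obtain ⟨u, v, huv, hua, hu, hv⟩ := hsim.sk3d h2 (hsim.trans ha h)
  obtain ⟨p, q, hpq, hpqu, hp, hq⟩ := hsim.sk3d h1 hu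
  exact ⟨(p, q, v), hpq, by rw [hpqu]; exact huv, by rw [hpqu]; exact hua, hp, hq, hv⟩

noncomputable def chain {sim : E → E → Prop} (hsim : SKCong E sim) {e f d : E}
    (h1 : perp e f) (h2 : perp (op e f) d) (h : sim e (op (op e f) d)) :
    ℕ → {a : E // sim a e} :=
  Nat.rec ⟨e, hsim.refl e⟩ (fun _ p =>
    ⟨(Classical.choose (step_ex hsim h1 h2 h p.2)).1,
     (Classical.choose_spec (step_ex hsim h1 h2 h p.2)).2.2.2.1⟩)

noncomputable def seqF {sim : E → E → Prop} (hsim : SKCong E sim) {e f d : E}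
    (h1 : perp e f) (h2 : perp (op e f) d) (h : sim e (op (op e f) d))
    (n : ℕ) : E :=
  (Classical.choose (step_ex hsim h1 h2 h (chain hsim h1 h2 h n).2)).2.1

noncomputable def seqD {sim : E → E → Prop} (hsim : SKCong E sim) {e f d : E}
    (h1 : perp e f) (h2 : perp (op e f) d) (h : sim e (op (op e f) d))
    (n : ℕ) : E :=
  (Classical.choose (step_ex hsim h1 h2 h (chain hsim h1 h2 h n).2)).2.2

lemma chain_spec {sim : E → E → Prop} (hsim : SKCong E sim) {e f d : E}
    (h1 : perp e f) (h2 : perp (op e f) d) (h : sim e (op (op e f) d))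
    (n : ℕ) :
    perp ((chain hsim h1 h2 h (n+1)).1) (seqF hsim h1 h2 h n) ∧
    perp (op ((chain hsim h1 h2 h (n+1)).1) (seqF hsim h1 h2 h n)) (seqD hsim h1 h2 h n) ∧
    op (op ((chain hsim h1 h2 h (n+1)).1) (seqF hsim h1 h2 h n)) (seqD hsim h1 h2 h n)
      = (chain hsim h1 h2 h n).1 ∧
    sim (seqF hsim h1 h2 h n) f ∧ sim (seqD hsim h1 h2 h n) d := by
  have hs := Classical.choose_spec (step_ex hsim h1 h2 h (chain hsim h1 h2 h n).2)
  exact ⟨hs.1, hs.2.1, hs.2.2.1, hs.2.2.2.2⟩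

/-- Reindexing bijection `ℕ ≃ Option ℕ` sending `1 ↦ none`, evens to
themselves, and odd `k ≥ 3` to `k - 2`. -/
def tau : ℕ ≃ Option ℕ where
  toFun k := if k = 1 then none else if k % 2 = 0 then some k else some (k-2)
  invFun o := o.elim 1 (fun j => if j % 2 = 0 then j else j+2)
  left_inv k := by
    by_cases hk : k = 1
    · simp [hk]
    · by_cases he : k % 2 = 0
      · simp [hk, he]
      · have h3 : ¬ (k - 2) % 2 = 0 := by omega
        simp only [hk, he, if_neg, if_false, ite_false]
        simp only [Option.elim, h3, ite_false]
        omega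
  right_inv o := by
    rcases o with _ | j
    · simp
    · by_cases hj : j % 2 = 0
      · simp [hj, show j ≠ 1 by omega]
      · simp [hj, show ¬(j+2) = 1 by omega, show ¬(j+2) % 2 = 0 by omega]

lemma main_aux (sim : E → E → Prop) (hsim : SKCong E sim) (hD : DedekindOC E)
    (e f d : E) (h1 : perp e f) (h2 : perp (op e f) d)
    (h : sim e (op (op e f) d)) : sim e (op e f) := by
  classical
  have hspec := chain_spec hsim h1 h2 h
  set c : ℕ → {a : E // sim a e} := chain hsim h1 h2 h with hc
  set fs : ℕ → E := seqF hsim h1 h2 h with hfs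
  set ds : ℕ → E := seqD hsim h1 h2 h with hds
  have hc0 : (c 0).1 = e := by rw [hc]; rfl
  set g : ℕ → E := fun k => if k % 2 = 0 then fs (k/2) else ds (k/2) with hg
  have hg2 : ∀ n, g (2*n) = fs n := by
    intro n
    simp only [hg]
    rw [if_pos (by omega)]
    congr 1
    omega
  have hg21 : ∀ n, g (2*n+1) = ds n := by
    intro n
    simp only [hg]
    rw [if_neg (by omega)]
    congr 1
    omega
  -- partial sums over initial segments
  have hseg : ∀ n, ∃ S, FinSum g (Finset.range (2*n)) S ∧ perp (c n).1 S ∧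
      op (c n).1 S = e := by
    intro n
    induction n with
    | zero =>
      refine ⟨zero, ?_, perp_zero _, by rw [op_zero, hc0]⟩
      rw [show 2*0 = 0 from rfl, Finset.range_zero]
      exact FinSum.empty
    | succ n ih =>
      obtain ⟨S, hS, hpS, heS⟩ := ih
      obtain ⟨hef', hefd', heq', hsf, hsd⟩ := hspec n
      have hpS' : perp (op (op (c (n+1)).1 (fs n)) (ds n)) S := by
        rw [heq']; exact hpS
      have hA := assoc' hefd' hpS'
      have hB := assoc' hef' hA.2.1
      have hC := swap' hA.1 hB.1
      have h1' : 2*n ∉ Finset.range (2*n) := by simp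
      have hFS1 : FinSum g (Finset.cons (2*n) (Finset.range (2*n)) h1')
          (op (fs n) S) := by
        have hx : perp (g (2*n)) S := by rw [hg2 n]; exact hC.1
        have := FinSum.cons h1' hS hx
        rwa [hg2 n] at this
      have h2' : 2*n+1 ∉ Finset.cons (2*n) (Finset.range (2*n)) h1' := by simp
      have hFS2 : FinSum g (Finset.cons (2*n+1) _ h2')
          (op (ds n) (op (fs n) S)) := by
        have hx : perp (g (2*n+1)) (op (fs n) S) := by rw [hg21 n]; exact hC.2.1
        have := FinSum.cons h2' hFS1 hx
        rwa [hg21 n] at this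
      have hrange : Finset.range (2*(n+1)) =
          Finset.cons (2*n+1) (Finset.cons (2*n) (Finset.range (2*n)) h1') h2' := by
        ext k
        simp only [Finset.mem_range, Finset.mem_cons]
        omega
      refine ⟨op (ds n) (op (fs n) S), by rw [hrange]; exact hFS2, ?_, ?_⟩
      · rw [← hC.2.2]; exact hB.2.1
      · rw [← hC.2.2, ← hB.2.2, ← hA.2.2, heq']; exact heS
  -- all finite partial sums are below e
  have hbound : ∀ (s : Finset ℕ) (x : E), FinSum g s x → le x e := by
    intro s x hx
    obtain ⟨S, hS, hpS, heS⟩ := hseg (s.sup id + 1)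
    have hsub : s ⊆ Finset.range (2*(s.sup id + 1)) := by
      intro k hk
      have := Finset.le_sup (f := id) hk
      simp only [id] at this
      exact Finset.mem_range.mpr (by omega)
    obtain ⟨y, hy, hley⟩ := finSum_subset hS s hsub
    rw [finSum_unique hx hy]
    refine le_trans' hley ⟨(c _).1, perp_comm hpS, ?_⟩
    rw [op_comm (perp_comm hpS)]; exact heS
  have hOF : OrthoFam g := by
    intro s
    obtain ⟨S, hS, _, _⟩ := hseg (s.sup id + 1)
    have hsub : s ⊆ Finset.range (2*(s.sup id + 1)) := by
      intro k hk
      have := Finset.le_sup (f := id) hk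
      simp only [id] at this
      exact Finset.mem_range.mpr (by omega)
    obtain ⟨y, hy, _⟩ := finSum_subset hS s hsub
    exact ⟨y, hy⟩
  obtain ⟨m, hm⟩ := hD ℕ g hOF ⟨e, hbound⟩
  obtain ⟨r, hmr, hre⟩ := hm.2.2 e hbound
  have hme' : le m e := ⟨r, hmr, hre⟩
  have hmf : perp m f := perp_of_le hme' h1
  have hfm : perp f m := perp_comm hmf
  have hA1 := assoc' hmr (show perp (op m r) f by rw [hre]; exact h1)
  have hA2 := swap' hA1.1 hA1.2.1
  have hrfm : perp r (op f m) := by rw [op_comm hfm]; exact hA2.2.1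
  have hEF : op e f = op r (op f m) := by
    rw [op_comm hfm, ← hA2.2.2, ← hA1.2.2, hre]
  have hmd : perp m d := perp_of_le (le_trans' hme' (le_op_self h1)) h2
  have hdm : perp d m := perp_comm hmd
  have hfme : le (op f m) (op e f) := by
    have h3 := (op_le_op (perp_comm h1) hme').2
    rwa [op_comm (perp_comm h1)] at h3
  have hfmd : perp (op f m) d := perp_of_le hfme h2
  have hB1 := assoc' hfm hfmd
  have hfdm : perp f (op d m) := by rw [op_comm hdm]; exact hB1.2.1
  have hC1 := assoc' hrfm (show perp (op r (op f m)) d by rw [← hEF]; exact h2)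
  have hEFD : op (op e f) d = op r (op f (op d m)) := by
    rw [hEF, hC1.2.2, hB1.2.2, op_comm hdm]
  have hrfdm : perp r (op f (op d m)) := by
    have h3 := hC1.2.1
    rw [hB1.2.2] at h3
    rw [op_comm hdm]; exact h3
  -- the two orthosums
  have hOS1 := isOrthosum_cons hm hfm
  have hOSA := isOrthosum_cons hOS1 hrfm
  have hOSA' : IsOrthosum
      (fun o : Option (Option ℕ) => o.elim r (fun o' => o'.elim f g)) (op e f) := by
    rw [hEF]; exact hOSA
  have hOS2 := isOrthosum_cons hm hdm
  have hOS2' : IsOrthosum (fun k : ℕ => (tau k).elim d g) (op d m) :=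
    isOrthosum_reindex (σ := tau) hOS2
  have hOS3 := isOrthosum_cons hOS2' hfdm
  have hOSB := isOrthosum_cons hOS3 hrfdm
  have hOSB' : IsOrthosum
      (fun o : Option (Option ℕ) =>
        o.elim r (fun o' => o'.elim f (fun k : ℕ => (tau k).elim d g)))
      (op (op e f) d) := by
    rw [hEFD]; exact hOSB
  have hsims : ∀ o : Option (Option ℕ),
      sim ((fun o : Option (Option ℕ) =>
        o.elim r (fun o' => o'.elim f (fun k : ℕ => (tau k).elim d g))) o)
      ((fun o : Option (Option ℕ) => o.elim r (fun o' => o'.elim f g)) o) := by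
    rintro (_ | (_ | k))
    · exact hsim.refl r
    · exact hsim.refl f
    · simp only [Option.elim]
      by_cases hk : k = 1
      · subst hk
        have ht : tau 1 = none := by simp [tau]
        rw [ht]
        have hgd : g 1 = ds 0 := by
          have := hg21 0
          simpa using this
        rw [hgd]
        exact hsim.symm (hspec 0).2.2.2.2
      · by_cases he : k % 2 = 0
        · have ht : tau k = some k := by simp [tau, hk, he]
          rw [ht]
          exact hsim.refl (g k)
        · have ht : tau k = some (k-2) := by simp [tau, hk, he]
          rw [ht]
          show sim (g (k-2)) (g k)
          have e1 : g (k-2) = ds ((k-2)/2) := by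
            simp only [hg]
            rw [if_neg (by omega)]
          have e2 : g k = ds (k/2) := by
            simp only [hg]
            rw [if_neg he]
          rw [e1, e2]
          exact hsim.trans (hspec _).2.2.2.2 (hsim.symm (hspec _).2.2.2.2)
  exact hsim.trans h (hsim.sk2 _ _ _ _ hOSB' hOSA' hsims)

end GEA

/-- in a Dedekind orthocomplete GEA with SK-congruence,
`e ∼ e ⊕ f ⊕ d` implies `e ∼ e ⊕ f`. -/
theorem sim_cancel_of_dedekind {E : Type u} [GEA E]
    (sim : E → E → Prop) (hsim : GEA.SKCong E sim) (hD : GEA.DedekindOC E)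
    (e f d : E) (h1 : GEA.perp e f) (h2 : GEA.perp (GEA.op e f) d)
    (h : sim e (GEA.op (GEA.op e f) d)) : sim e (GEA.op e f) :=
  GEA.main_aux sim hsim hD e f d h1 h2 h
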